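/- Let ε, η, K₀, D̄, λ_K be positive real constants, let 0 < m_min ≤ m_max and K* be reals with K* > m_max·D̄, and let γ satisfy 0 < γ < η·m_min·K₀/(λ_K·m_min + ε). Let m : ℝ → ℝ satisfy m_min ≤ m(t) ≤ m_max for all t, let d̄ : ℝ → ℝ³ satisfy ‖d̄(t)‖₂ < D̄ for all t, let K : ℝ → ℝ be differentiable with K(0) ≥ K₀, K(t) ≤ K* for all t ≥ 0, and K'(t) = η·(‖u(t)‖₂ − K(t) + K₀) for all t ≥ 0, where u(t) := −(K(t)/ε)·s(t), and let s : ℝ → ℝ³ be differentiable with s'(t) = (1/m(t))·u(t) + d̄(t). Define V(t) := (1/2)·‖s(t)‖₂² + (1/(2γ))·(K(t) − K*)², λ_s := (K* − m_max·D̄)/m_max, and λ := √2·min(λ_s, λ_K·√γ). Then for every t ≥ 0 with ‖s(t)‖₂ > ε, the derivative of V satisfies V'(t) < −λ·√(V(t)). -/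

import Mathlib

/-!
Along the closed loop the adaptation law gives `K' ≥ η (K₀ - K)`, so the gain never drops below
`K₀`. Writing `S = ‖s‖₂ > ε` and `Δ = K* - K ≥ 0`, the sliding part of `V'` is at most
`-(K - m_max D̄) S / m_max` and the adaptation part at most `-η K₀ Δ S / (γ ε)`; the bound on `γ`
makes their sum smaller than `-(λ_s S + λ_K Δ)`. Finally `λ² V ≤ λ_s² S² + λ_K² Δ²`, so that
`λ √V ≤ λ_s S + λ_K Δ`.
-/

open Real Set

noncomputable def norm2 (x : Fin 3 → ℝ) : ℝ := Real.sqrt (∑ i, x i ^ 2)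

lemma norm2_nonneg (x : Fin 3 → ℝ) : 0 ≤ norm2 x := sqrt_nonneg _

lemma sq_norm2 (x : Fin 3 → ℝ) : norm2 x ^ 2 = ∑ i, x i ^ 2 :=
  sq_sqrt (Finset.sum_nonneg fun _ _ => sq_nonneg _)

lemma norm2_smul (c : ℝ) (x : Fin 3 → ℝ) : norm2 (c • x) = |c| * norm2 x := by
  have h : ∑ i, (c • x) i ^ 2 = c ^ 2 * ∑ i, x i ^ 2 := by
    simp [Finset.mul_sum, mul_pow]
  rw [norm2, norm2, h, sqrt_mul (sq_nonneg c), sqrt_sq_eq_abs]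

lemma sum_mul_le_norm2_mul_norm2 (x y : Fin 3 → ℝ) : ∑ i, x i * y i ≤ norm2 x * norm2 y :=
  sum_mul_le_sqrt_mul_sqrt _ _ _

/-- Because `exp (η τ) * (K τ - c)` is monotone on `[a, ∞)`. -/
theorem le_of_deriv_ge_mul_sub {K : ℝ → ℝ} {η c a : ℝ} (hK : Differentiable ℝ K) (ha : c ≤ K a)
    (hK' : ∀ τ, a ≤ τ → η * (c - K τ) ≤ deriv K τ) {t : ℝ} (ht : a ≤ t) : c ≤ K t := by
  set g : ℝ → ℝ := fun τ => exp (η * τ) * (K τ - c)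
  have hg : ∀ τ, HasDerivAt g (exp (η * τ) * (η * (K τ - c) + deriv K τ)) τ := fun τ => by
    have hexp : HasDerivAt (fun x => exp (η * x)) (exp (η * τ) * η) τ := by
      simpa using ((hasDerivAt_id τ).const_mul η).exp
    exact (hexp.mul ((hK τ).hasDerivAt.sub_const c)).congr_deriv (by ring)
  have hgd : Differentiable ℝ g := fun τ => (hg τ).differentiableAt
  have hmono : MonotoneOn g (Ici a) := by
    refine monotoneOn_of_deriv_nonneg (convex_Ici a) hgd.continuous.continuousOn
      hgd.differentiableOn fun τ hτ => ?_
    rw [interior_Ici] at hτ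
    rw [(hg τ).deriv]
    exact mul_nonneg (exp_pos _).le (by linarith [hK' τ hτ.le])
  have hgt : 0 ≤ g t :=
    (mul_nonneg (exp_pos _).le (sub_nonneg.2 ha)).trans (hmono self_mem_Ici ht ht)
  exact sub_nonneg.1 ((mul_nonneg_iff_of_pos_left (exp_pos _)).1 hgt)

theorem hasDerivAt_half_sum_sq_add {ι : Type*} [Fintype ι] {s : ℝ → ι → ℝ} {s' : ι → ℝ}
    {K : ℝ → ℝ} {K' γ c t : ℝ} (hs : HasDerivAt s s' t) (hK : HasDerivAt K K' t) :
    HasDerivAt (fun τ => (1 / 2 : ℝ) * (∑ i, (s τ i) ^ 2) + (1 / (2 * γ)) * (K τ - c) ^ 2)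
      (∑ i, s t i * s' i + 1 / γ * (K t - c) * K') t := by
  have hsq : HasDerivAt (fun τ => ∑ i, s τ i ^ 2) (∑ i, 2 * s t i * s' i) t :=
    HasDerivAt.fun_sum fun i _ =>
      ((hasDerivAt_pi.1 hs i).pow 2).congr_deriv (by push_cast; ring)
  refine ((hsq.const_mul (1 / 2 : ℝ)).add
    (((hK.sub_const c).pow 2).const_mul (1 / (2 * γ)))).congr_deriv ?_
  rw [Finset.mul_sum]
  push_cast
  ring_nf

section Estimates

variable {ε η γ K₀ K Kstar S : ℝ}

lemma sliding_term_lt {m mmax Dbar sd : ℝ} (hε : 0 < ε) (hS : ε < S) (hK : 0 ≤ K) (hm : 0 < m)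
    (hmM : m ≤ mmax) (hsd : sd < S * Dbar) :
    -(K / (m * ε)) * S ^ 2 + sd < -((K - mmax * Dbar) / mmax) * S := by
  have hmmax : 0 < mmax := hm.trans_le hmM
  have hS0 : 0 ≤ S := hε.le.trans hS.le
  have h1 : K / mmax * S ≤ K / m * S := by gcongr
  have h2 : K / m * S ≤ K / (m * ε) * S ^ 2 := by
    rw [show K / (m * ε) * S ^ 2 = K / m * S * (S / ε) by field_simp]
    exact le_mul_of_one_le_right (by positivity) ((one_le_div hε).2 hS.le)
  have e : -((K - mmax * Dbar) / mmax) * S = -(K / mmax * S) + S * Dbar := by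
    field_simp
    ring
  linarith

lemma adaptation_term_le (hε : 0 < ε) (hS : ε ≤ S) (hη : 0 ≤ η) (hγ : 0 ≤ γ) (hK₀ : K₀ ≤ K)
    (hK : K ≤ Kstar) :
    1 / γ * (K - Kstar) * (η * (K / ε * S - K + K₀)) ≤ -(η * K₀ / (γ * ε)) * (Kstar - K) * S := by
  have hkey : K₀ / ε * S ≤ K / ε * S - K + K₀ := by
    have e : K / ε * S - K + K₀ - K₀ / ε * S = (K - K₀) * (S - ε) / ε := by
      field_simp
      ring
    have : 0 ≤ (K - K₀) * (S - ε) / ε := by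
      apply div_nonneg _ hε.le
      apply mul_nonneg <;> linarith
    linarith
  have hcoef : 1 / γ * (K - Kstar) * η ≤ 0 :=
    mul_nonpos_of_nonpos_of_nonneg
      (mul_nonpos_of_nonneg_of_nonpos (by positivity) (by linarith)) hη
  calc 1 / γ * (K - Kstar) * (η * (K / ε * S - K + K₀))
      = 1 / γ * (K - Kstar) * η * (K / ε * S - K + K₀) := by ring
    _ ≤ 1 / γ * (K - Kstar) * η * (K₀ / ε * S) := mul_le_mul_of_nonpos_left hkey hcoef
    _ = -(η * K₀ / (γ * ε)) * (Kstar - K) * S := by ring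

lemma adaptation_gain_bound {lamK mmin mmax : ℝ} (hε : 0 < ε) (hlamK : 0 ≤ lamK) (hm : 0 < mmin)
    (hmm : mmin ≤ mmax) (hγ : 0 ≤ γ) (hγ2 : γ < η * mmin * K₀ / (lamK * mmin + ε)) :
    γ * (lamK + ε / mmax) ≤ η * K₀ := by
  rw [lt_div_iff₀ (by positivity)] at hγ2
  have hmin : γ * (lamK + ε / mmin) < η * K₀ := by
    rw [show γ * (lamK + ε / mmin) = γ * (lamK * mmin + ε) / mmin by field_simp]
    rw [div_lt_iff₀ hm]
    linarith
  have : γ * (lamK + ε / mmax) ≤ γ * (lamK + ε / mmin) := by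
    gcongr
  linarith

lemma lyapunov_deriv_lt {lamK m mmax Dbar sd : ℝ} (hε : 0 < ε) (hS : ε < S) (hK₀ : 0 < K₀)
    (hK₀K : K₀ ≤ K) (hKs : K ≤ Kstar) (hm : 0 < m) (hmM : m ≤ mmax) (hsd : sd < S * Dbar)
    (hγ : 0 < γ) (hη : 0 ≤ η) (hlamK : 0 ≤ lamK) (hgain : γ * (lamK + ε / mmax) ≤ η * K₀) :
    -(K / (m * ε)) * S ^ 2 + sd + 1 / γ * (K - Kstar) * (η * (K / ε * S - K + K₀))
      < -((Kstar - mmax * Dbar) / mmax * S + lamK * (Kstar - K)) := by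
  have hmmax : 0 < mmax := hm.trans_le hmM
  have hΔS : 0 ≤ (Kstar - K) * S := mul_nonneg (sub_nonneg.2 hKs) (hε.trans hS).le
  have hsliding := sliding_term_lt hε hS (hK₀.le.trans hK₀K) hm hmM hsd
  have hadapt := adaptation_term_le hε hS.le hη hγ.le hK₀K hKs
  have hrate : (lamK + ε / mmax) / ε ≤ η * K₀ / (γ * ε) := by
    rw [div_le_div_iff₀ hε (by positivity)]
    nlinarith
  have hlam : lamK * (Kstar - K) ≤ lamK / ε * ((Kstar - K) * S) := by
    rw [show lamK / ε * ((Kstar - K) * S) = lamK * (Kstar - K) * (S / ε) by field_simp]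
    exact le_mul_of_one_le_right (mul_nonneg hlamK (by linarith)) ((one_le_div hε).2 hS.le)
  have e₁ : -((K - mmax * Dbar) / mmax) * S
      = -((Kstar - mmax * Dbar) / mmax * S) + 1 / mmax * ((Kstar - K) * S) := by
    field_simp
    ring
  have e₂ : (lamK + ε / mmax) / ε * ((Kstar - K) * S)
      = lamK / ε * ((Kstar - K) * S) + 1 / mmax * ((Kstar - K) * S) := by
    field_simp
  have e₃ : -(η * K₀ / (γ * ε)) * (Kstar - K) * S = -(η * K₀ / (γ * ε) * ((Kstar - K) * S)) := by
    ring
  linarith [mul_le_mul_of_nonneg_right hrate hΔS]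

end Estimates

lemma sqrt_two_mul_min_mul_sqrt_le {a b γ S Δ : ℝ} (ha : 0 ≤ a) (hb : 0 ≤ b) (hγ : 0 < γ)
    (hS : 0 ≤ S) (hΔ : 0 ≤ Δ) :
    sqrt 2 * min a (b * sqrt γ) * sqrt ((1 / 2 : ℝ) * S ^ 2 + (1 / (2 * γ)) * Δ ^ 2)
      ≤ a * S + b * Δ := by
  set μ := min a (b * sqrt γ)
  have hμ : 0 ≤ μ := le_min ha (by positivity)
  have hμa : μ ^ 2 ≤ a ^ 2 := pow_le_pow_left₀ hμ (min_le_left _ _) 2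
  have hμb : μ ^ 2 ≤ b ^ 2 * γ := by
    simpa [mul_pow, sq_sqrt hγ.le] using pow_le_pow_left₀ hμ (min_le_right a (b * sqrt γ)) 2
  have hsq : (sqrt 2 * μ * sqrt ((1 / 2 : ℝ) * S ^ 2 + (1 / (2 * γ)) * Δ ^ 2)) ^ 2
      = μ ^ 2 * S ^ 2 + μ ^ 2 / γ * Δ ^ 2 := by
    rw [mul_pow, mul_pow, sq_sqrt zero_le_two, sq_sqrt (by positivity)]
    field_simp
  have hΔterm : μ ^ 2 / γ * Δ ^ 2 ≤ b ^ 2 * Δ ^ 2 := by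
    gcongr
    rwa [div_le_iff₀ hγ]
  rw [← pow_le_pow_iff_left₀ (by positivity) (by positivity) two_ne_zero, hsq]
  calc μ ^ 2 * S ^ 2 + μ ^ 2 / γ * Δ ^ 2 ≤ a ^ 2 * S ^ 2 + b ^ 2 * Δ ^ 2 :=
        add_le_add (mul_le_mul_of_nonneg_right hμa (sq_nonneg S)) hΔterm
    _ ≤ (a * S + b * Δ) ^ 2 := by nlinarith [mul_nonneg (mul_nonneg ha hb) (mul_nonneg hS hΔ)]

theorem rocs_reaching_condition_general
    (ε η K₀ Dbar lamK mmin mmax Kstar γ : ℝ)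
    (hε : 0 < ε) (hη : 0 < η) (hK₀ : 0 < K₀) (hlamK : 0 < lamK)
    (hm : 0 < mmin) (hmm : mmin ≤ mmax) (hKs : mmax * Dbar < Kstar)
    (hγ : 0 < γ) (hγ2 : γ < η * mmin * K₀ / (lamK * mmin + ε))
    (m : ℝ → ℝ) (hmb : ∀ t, mmin ≤ m t ∧ m t ≤ mmax)
    (d : ℝ → Fin 3 → ℝ) (hd : ∀ t, norm2 (d t) < Dbar)
    (K : ℝ → ℝ) (hKdiff : Differentiable ℝ K) (hK0 : K₀ ≤ K 0)
    (hKub : ∀ t, 0 ≤ t → K t ≤ Kstar)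
    (s : ℝ → Fin 3 → ℝ) (hs : Differentiable ℝ s)
    (u : ℝ → Fin 3 → ℝ) (hu : ∀ t, u t = -(K t / ε) • s t)
    (hKlaw : ∀ t, 0 ≤ t → deriv K t = η * (norm2 (u t) - K t + K₀))
    (hsd : ∀ t, deriv s t = (1 / m t) • u t + d t) :
    ∀ t, 0 ≤ t → ε < norm2 (s t) →
      deriv (fun τ => (1 / 2 : ℝ) * (∑ i, (s τ i) ^ 2)
          + (1 / (2 * γ)) * (K τ - Kstar) ^ 2) t
        < -(Real.sqrt 2 * min ((Kstar - mmax * Dbar) / mmax) (lamK * Real.sqrt γ)) *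
            Real.sqrt ((1 / 2 : ℝ) * (∑ i, (s t i) ^ 2)
              + (1 / (2 * γ)) * (K t - Kstar) ^ 2) := by
  intro t ht hst
  obtain ⟨hm₁, hm₂⟩ := hmb t
  have hmmax : 0 < mmax := hm.trans_le hmm
  have hKt : K₀ ≤ K t := le_of_deriv_ge_mul_sub hKdiff hK0 (fun τ hτ => by
    rw [hKlaw τ hτ]
    exact mul_le_mul_of_nonneg_left (by linarith [norm2_nonneg (u τ)]) hη.le) ht
  set S := norm2 (s t)
  have hS2 : ∑ i, s t i ^ 2 = S ^ 2 := (sq_norm2 _).symm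
  have hnu : norm2 (u t) = K t / ε * S := by
    rw [hu t, norm2_smul, abs_neg, abs_of_nonneg (div_nonneg (hK₀.le.trans hKt) hε.le)]
  have hsum : ∑ i, s t i * deriv s t i = -(K t / (m t * ε)) * S ^ 2 + ∑ i, s t i * d t i := by
    rw [← hS2, Finset.mul_sum, ← Finset.sum_add_distrib]
    refine Finset.sum_congr rfl fun i _ => ?_
    simp only [hsd t, hu t, Pi.add_apply, Pi.smul_apply, smul_eq_mul]
    ring
  have hsd_lt : ∑ i, s t i * d t i < S * Dbar :=
    (sum_mul_le_norm2_mul_norm2 _ _).trans_lt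
      (mul_lt_mul_of_pos_left (hd t) (hε.trans hst))
  rw [(hasDerivAt_half_sum_sq_add (hs t).hasDerivAt (hKdiff t).hasDerivAt).deriv, hsum,
    hKlaw t ht, hnu, hS2, show (K t - Kstar) ^ 2 = (Kstar - K t) ^ 2 by ring]
  calc _ < -((Kstar - mmax * Dbar) / mmax * S + lamK * (Kstar - K t)) :=
        lyapunov_deriv_lt hε hst hK₀ hKt (hKub t ht) (hm.trans_le hm₁) hm₂ hsd_lt hγ hη.le
          hlamK.le (adaptation_gain_bound hε hlamK.le hm hmm hγ.le hγ2)
    _ ≤ _ := by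
        rw [neg_mul, neg_le_neg_iff]
        exact sqrt_two_mul_min_mul_sqrt_le (div_nonneg (by linarith) hmmax.le) hlamK.le hγ
          (hε.le.trans hst.le) (by linarith [hKub t ht])

/-- Theorem 1 (ROCS reaching condition): with the adaptive smooth control
`u = −(K/ε)s`, the adaptation law `K' = η(‖u‖₂ − K + K₀)`, bounded mass and
disturbance, `K ≤ K*` with `K* > m_max·D̄`, and
`γ < η·m_min·K₀/(lam_K·m_min + ε)`, the Lyapunov function
`V = ½‖s‖₂² + (1/2γ)(K − K*)²` satisfies `V' < −lam·√V` whenever `‖s‖₂ > ε`,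
where `lam = √2·min(lam_s, lam_K√γ)` and `lam_s = (K* − m_max·D̄)/m_max`. -/
theorem rocs_reaching_condition
    (ε η K₀ Dbar lamK mmin mmax Kstar γ : ℝ)
    (hε : 0 < ε) (hη : 0 < η) (hK₀ : 0 < K₀) (hD : 0 < Dbar) (hlamK : 0 < lamK)
    (hm : 0 < mmin) (hmm : mmin ≤ mmax) (hKs : mmax * Dbar < Kstar)
    (hγ : 0 < γ) (hγ2 : γ < η * mmin * K₀ / (lamK * mmin + ε))
    (m : ℝ → ℝ) (hmb : ∀ t, mmin ≤ m t ∧ m t ≤ mmax)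
    (d : ℝ → Fin 3 → ℝ) (hd : ∀ t, norm2 (d t) < Dbar)
    (K : ℝ → ℝ) (hKdiff : Differentiable ℝ K) (hK0 : K₀ ≤ K 0)
    (hKub : ∀ t, 0 ≤ t → K t ≤ Kstar)
    (s : ℝ → Fin 3 → ℝ) (hs : Differentiable ℝ s)
    (u : ℝ → Fin 3 → ℝ) (hu : ∀ t, u t = -(K t / ε) • s t)
    (hKlaw : ∀ t, 0 ≤ t → deriv K t = η * (norm2 (u t) - K t + K₀))
    (hsd : ∀ t, deriv s t = (1 / m t) • u t + d t) :
    ∀ t, 0 ≤ t → ε < norm2 (s t) →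
      deriv (fun τ => (1 / 2 : ℝ) * (∑ i, (s τ i) ^ 2)
          + (1 / (2 * γ)) * (K τ - Kstar) ^ 2) t
        < -(Real.sqrt 2 * min ((Kstar - mmax * Dbar) / mmax) (lamK * Real.sqrt γ)) *
            Real.sqrt ((1 / 2 : ℝ) * (∑ i, (s t i) ^ 2)
              + (1 / (2 * γ)) * (K t - Kstar) ^ 2) :=
  rocs_reaching_condition_general ε η K₀ Dbar lamK mmin mmax Kstar γ hε hη hK₀ hlamK hm hmm hKs hγ
    hγ2 m hmb d hd K hKdiff hK0 hKub s hs u hu hKlaw hsd
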